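/- arXiv:2003.07744 — 3 statements merged into one kernel-verified Lean document; each statement's English description precedes it below -/
import Mathlib

section
/- Let A be a nonempty set of positive linear normalized functionals (probability measures viewed as functionals) on C(X,ℝ). Then the functional ν_A defined by ν_A(φ) = sup{μ(φ) : μ ∈ A} is well-defined (the supremum is finite) and is normed, order-preserving, weakly additive, positively homogeneous, and semiadditive. -/
/-! Positivity makes each `μ ∈ A` monotone, so `φ ≤ ‖φ‖ • 1` gives `μ φ ≤ ‖φ‖` and every supremum
defining `ν_A` is finite. The other properties of `μ` pass to the supremum, since `x ↦ x + c` and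
`x ↦ t * x` (`t ≥ 0`) commute with bounded suprema, and `μ (φ + ψ) = μ φ + μ ψ ≤ ν_A φ + ν_A ψ`. -/

open Set

theorem monotone_of_map_add_of_map_nonneg {E : Type*} [AddCommGroup E] [PartialOrder E]
    [IsOrderedAddMonoid E] {μ : E → ℝ} (hadd : ∀ φ ψ, μ (φ + ψ) = μ φ + μ ψ)
    (hpos : ∀ φ, 0 ≤ φ → 0 ≤ μ φ) : Monotone μ :=
  (monotone_iff_map_nonneg (AddMonoidHom.mk' μ hadd)).2 hpos

namespace ContinuousMap

variable {X : Type*} [TopologicalSpace X] {μ : C(X, ℝ) → ℝ}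

theorem map_const_of_map_smul (hsmul : ∀ (c : ℝ) (φ : C(X, ℝ)), μ (c • φ) = c * μ φ)
    (hone : μ 1 = 1) (c : ℝ) : μ (const X c) = c := by
  have : const X c = c • (1 : C(X, ℝ)) := by ext; simp
  rw [this, hsmul, hone, mul_one]

theorem apply_le_norm_of_monotone [CompactSpace X] (hmono : Monotone μ)
    (hsmul : ∀ (c : ℝ) (φ : C(X, ℝ)), μ (c • φ) = c * μ φ) (hone : μ 1 = 1) (φ : C(X, ℝ)) :
    μ φ ≤ ‖φ‖ :=
  calc μ φ ≤ μ (const X ‖φ‖) := hmono fun x => (le_abs_self _).trans (φ.norm_coe_le_norm x)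
    _ = ‖φ‖ := map_const_of_map_smul hsmul hone _

end ContinuousMap

theorem stmt_6_general {X : Type*} [TopologicalSpace X] [CompactSpace X]
    (A : Set ((C(X, ℝ)) → ℝ)) (hAne : A.Nonempty)
    (hlin : ∀ μ ∈ A, (∀ φ ψ : C(X, ℝ), μ (φ + ψ) = μ φ + μ ψ) ∧
      (∀ (c : ℝ) (φ : C(X, ℝ)), μ (c • φ) = c * μ φ))
    (hpos : ∀ μ ∈ A, ∀ φ : C(X, ℝ), 0 ≤ φ → 0 ≤ μ φ)
    (hnorm : ∀ μ ∈ A, μ 1 = 1) :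
    (∀ φ : C(X, ℝ), BddAbove ((fun μ => μ φ) '' A)) ∧
    (⨆ μ : A, (μ : (C(X, ℝ)) → ℝ) 1) = 1 ∧
    (∀ φ ψ : C(X, ℝ), φ ≤ ψ →
      (⨆ μ : A, (μ : (C(X, ℝ)) → ℝ) φ) ≤ ⨆ μ : A, (μ : (C(X, ℝ)) → ℝ) ψ) ∧
    (∀ (φ : C(X, ℝ)) (c : ℝ),
      (⨆ μ : A, (μ : (C(X, ℝ)) → ℝ) (φ + ContinuousMap.const X c)) =
        (⨆ μ : A, (μ : (C(X, ℝ)) → ℝ) φ) + c) ∧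
    (∀ (t : ℝ), 0 ≤ t → ∀ φ : C(X, ℝ),
      (⨆ μ : A, (μ : (C(X, ℝ)) → ℝ) (t • φ)) = t * ⨆ μ : A, (μ : (C(X, ℝ)) → ℝ) φ) ∧
    (∀ φ ψ : C(X, ℝ),
      (⨆ μ : A, (μ : (C(X, ℝ)) → ℝ) (φ + ψ)) ≤
        (⨆ μ : A, (μ : (C(X, ℝ)) → ℝ) φ) + ⨆ μ : A, (μ : (C(X, ℝ)) → ℝ) ψ) := by
  have : Nonempty A := hAne.to_subtype
  have hmono (μ : A) : Monotone (μ : C(X, ℝ) → ℝ) :=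
    monotone_of_map_add_of_map_nonneg (hlin μ μ.2).1 (hpos μ μ.2)
  have hle_norm (μ : A) (φ : C(X, ℝ)) : (μ : C(X, ℝ) → ℝ) φ ≤ ‖φ‖ :=
    ContinuousMap.apply_le_norm_of_monotone (hmono μ) (hlin μ μ.2).2 (hnorm μ μ.2) φ
  have hbdd (φ : C(X, ℝ)) : BddAbove (range fun μ : A => (μ : C(X, ℝ) → ℝ) φ) :=
    ⟨‖φ‖, forall_mem_range.2 fun μ => hle_norm μ φ⟩
  refine ⟨fun φ => ⟨‖φ‖, forall_mem_image.2 fun μ hμ => hle_norm ⟨μ, hμ⟩ φ⟩, ?_, ?_, ?_, ?_, ?_⟩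
  · simp only [fun μ : A => hnorm μ μ.2, ciSup_const]
  · exact fun φ ψ hφψ => ciSup_mono (hbdd ψ) fun μ => hmono μ hφψ
  · intro φ c
    have hshift (μ : A) : (μ : C(X, ℝ) → ℝ) (φ + ContinuousMap.const X c) =
        (μ : C(X, ℝ) → ℝ) φ + c := by
      rw [(hlin μ μ.2).1, ContinuousMap.map_const_of_map_smul (hlin μ μ.2).2 (hnorm μ μ.2)]
    simp only [hshift]
    exact (ciSup_add (hbdd φ) c).symm
  · intro t ht φ
    simp only [fun μ : A => (hlin μ μ.2).2 t φ]
    exact (Real.mul_iSup_of_nonneg ht _).symm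
  · intro φ ψ
    refine ciSup_le fun μ => ?_
    rw [(hlin μ μ.2).1]
    exact add_le_add (le_ciSup (hbdd φ) μ) (le_ciSup (hbdd ψ) μ)

theorem stmt_6 {X : Type*} [TopologicalSpace X] [CompactSpace X] [T2Space X] [Nonempty X]
    (A : Set ((C(X, ℝ)) → ℝ)) (hAne : A.Nonempty)
    (hlin : ∀ μ ∈ A, (∀ φ ψ : C(X, ℝ), μ (φ + ψ) = μ φ + μ ψ) ∧
      (∀ (c : ℝ) (φ : C(X, ℝ)), μ (c • φ) = c * μ φ))
    (hpos : ∀ μ ∈ A, ∀ φ : C(X, ℝ), 0 ≤ φ → 0 ≤ μ φ)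
    (hnorm : ∀ μ ∈ A, μ 1 = 1) :
    (∀ φ : C(X, ℝ), BddAbove ((fun μ => μ φ) '' A)) ∧
    (⨆ μ : A, (μ : (C(X, ℝ)) → ℝ) 1) = 1 ∧
    (∀ φ ψ : C(X, ℝ), φ ≤ ψ →
      (⨆ μ : A, (μ : (C(X, ℝ)) → ℝ) φ) ≤ ⨆ μ : A, (μ : (C(X, ℝ)) → ℝ) ψ) ∧
    (∀ (φ : C(X, ℝ)) (c : ℝ),
      (⨆ μ : A, (μ : (C(X, ℝ)) → ℝ) (φ + ContinuousMap.const X c)) =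
        (⨆ μ : A, (μ : (C(X, ℝ)) → ℝ) φ) + c) ∧
    (∀ (t : ℝ), 0 ≤ t → ∀ φ : C(X, ℝ),
      (⨆ μ : A, (μ : (C(X, ℝ)) → ℝ) (t • φ)) = t * ⨆ μ : A, (μ : (C(X, ℝ)) → ℝ) φ) ∧
    (∀ φ ψ : C(X, ℝ),
      (⨆ μ : A, (μ : (C(X, ℝ)) → ℝ) (φ + ψ)) ≤
        (⨆ μ : A, (μ : (C(X, ℝ)) → ℝ) φ) + ⨆ μ : A, (μ : (C(X, ℝ)) → ℝ) ψ) :=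
  stmt_6_general A hAne hlin hpos hnorm
end

section
/- If f : X → Y is an injective continuous map between compact Hausdorff spaces, then OS(f) : OS(X) → OS(Y), defined by OS(f)(μ)(ψ) = μ(ψ ∘ f), is injective. -/
def IsOSFunctional {Z : Type*} [TopologicalSpace Z] (μ : C(Z, ℝ) → ℝ) : Prop :=
  μ 1 = 1 ∧
  (∀ φ ψ : C(Z, ℝ), φ ≤ ψ → μ φ ≤ μ ψ) ∧
  (∀ (φ : C(Z, ℝ)) (c : ℝ), μ (φ + ContinuousMap.const Z c) = μ φ + c) ∧
  (∀ (t : ℝ), 0 ≤ t → ∀ φ : C(Z, ℝ), μ (t • φ) = t * μ φ) ∧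
  (∀ φ ψ : C(Z, ℝ), μ (φ + ψ) ≤ μ φ + μ ψ)

theorem stmt_11 {X Y : Type*} [TopologicalSpace X] [CompactSpace X] [T2Space X]
    [TopologicalSpace Y] [CompactSpace Y] [T2Space Y]
    (f : C(X, Y)) (hf : Function.Injective f)
    (μ ν : C(X, ℝ) → ℝ) (hμ : IsOSFunctional μ) (hν : IsOSFunctional ν)
    (h : ∀ ψ : C(Y, ℝ), μ (ψ.comp f) = ν (ψ.comp f)) :
    μ = ν := by
  have he := f.continuous.isClosedEmbedding hf
  funext φ
  obtain ⟨ψ, hψ⟩ := φ.exists_extension' he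
  have : ψ.comp f = φ := by ext x; exact congrFun hψ x
  rw [← this, h]
end

section
/- If f : X → Y is a surjective continuous map between compact Hausdorff spaces, then the map μ ↦ (ψ ↦ μ(ψ ∘ f)) from OS(X) to OS(Y) is surjective. -/
/-!
Extend `ν` along `f` from above: `μ φ` is the infimum of `ν ψ` over all `ψ` with `φ ≤ ψ ∘ f`.
Because `f` is surjective, `ψ₀ ∘ f ≤ ψ ∘ f` forces `ψ₀ ≤ ψ`, so by monotonicity of `ν` the infimum
at `ψ₀ ∘ f` is attained at `ψ₀` itself and `μ` extends `ν`. The majorant sets are compatible with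
adding constants, positive scaling and sums, so `μ` inherits the defining properties from `ν`.
-/

open ContinuousMap

namespace IsOSFunctional

variable {Z : Type*} [TopologicalSpace Z] {μ : C(Z, ℝ) → ℝ}

theorem map_one (hμ : IsOSFunctional μ) : μ 1 = 1 := hμ.1

theorem mono (hμ : IsOSFunctional μ) {φ ψ : C(Z, ℝ)} (h : φ ≤ ψ) : μ φ ≤ μ ψ := hμ.2.1 φ ψ h

theorem map_add_const (hμ : IsOSFunctional μ) (φ : C(Z, ℝ)) (c : ℝ) :
    μ (φ + const Z c) = μ φ + c :=
  hμ.2.2.1 φ c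

theorem map_smul (hμ : IsOSFunctional μ) {t : ℝ} (ht : 0 ≤ t) (φ : C(Z, ℝ)) :
    μ (t • φ) = t * μ φ :=
  hμ.2.2.2.1 t ht φ

theorem map_add_le (hμ : IsOSFunctional μ) (φ ψ : C(Z, ℝ)) : μ (φ + ψ) ≤ μ φ + μ ψ :=
  hμ.2.2.2.2 φ ψ

theorem map_zero (hμ : IsOSFunctional μ) : μ 0 = 0 := by
  simpa using hμ.map_smul le_rfl 0

theorem map_const (hμ : IsOSFunctional μ) (c : ℝ) : μ (const Z c) = c := by
  simpa [hμ.map_zero] using hμ.map_add_const 0 c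

end IsOSFunctional

section MajorantInf

variable {X Y : Type*} [TopologicalSpace X] [TopologicalSpace Y]

/-- Junk value `0` when `φ` has no majorant of the form `ψ.comp f`, which cannot happen for
compact `X`. -/
noncomputable def majorantInf (ν : C(Y, ℝ) → ℝ) (f : C(X, Y)) (φ : C(X, ℝ)) : ℝ :=
  sInf (ν '' {ψ | φ ≤ ψ.comp f})

variable {ν : C(Y, ℝ) → ℝ} {f : C(X, Y)} [CompactSpace X]

theorem nonempty_majorants (φ : C(X, ℝ)) :
    {ψ : C(Y, ℝ) | φ ≤ ψ.comp f}.Nonempty :=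
  ⟨const Y ‖φ‖, fun x => (le_abs_self _).trans (φ.norm_coe_le_norm x)⟩

theorem bddBelow_image_majorants (hν : IsOSFunctional ν)
    (hf : Function.Surjective f) (φ : C(X, ℝ)) : BddBelow (ν '' {ψ | φ ≤ ψ.comp f}) := by
  refine ⟨-‖φ‖, Set.forall_mem_image.2 fun ψ hψ => ?_⟩
  have hle : const Y (-‖φ‖) ≤ ψ := by
    intro y
    obtain ⟨x, rfl⟩ := hf y
    exact (neg_le_of_abs_le (φ.norm_coe_le_norm x)).trans (hψ x)
  simpa [hν.map_const] using hν.mono hle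

theorem majorantInf_le (hν : IsOSFunctional ν) (hf : Function.Surjective f)
    {φ : C(X, ℝ)} {ψ : C(Y, ℝ)} (h : φ ≤ ψ.comp f) : majorantInf ν f φ ≤ ν ψ :=
  csInf_le (bddBelow_image_majorants hν hf φ) ⟨ψ, h, rfl⟩

theorem le_majorantInf {φ : C(X, ℝ)} {r : ℝ}
    (h : ∀ ψ : C(Y, ℝ), φ ≤ ψ.comp f → r ≤ ν ψ) : r ≤ majorantInf ν f φ :=
  le_csInf ((nonempty_majorants φ).image ν) (Set.forall_mem_image.2 h)

variable (hν : IsOSFunctional ν) (hf : Function.Surjective f)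
include hν hf

theorem majorantInf_comp (ψ₀ : C(Y, ℝ)) : majorantInf ν f (ψ₀.comp f) = ν ψ₀ := by
  refine le_antisymm (majorantInf_le hν hf le_rfl) (le_majorantInf fun _ h => hν.mono ?_)
  intro y
  obtain ⟨x, rfl⟩ := hf y
  exact h x

theorem majorantInf_mono {φ₁ φ₂ : C(X, ℝ)} (h : φ₁ ≤ φ₂) :
    majorantInf ν f φ₁ ≤ majorantInf ν f φ₂ :=
  le_majorantInf fun _ hψ => majorantInf_le hν hf (h.trans hψ)

theorem majorantInf_add_const_le (φ : C(X, ℝ)) (c : ℝ) :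
    majorantInf ν f (φ + const X c) ≤ majorantInf ν f φ + c := by
  suffices majorantInf ν f (φ + const X c) - c ≤ majorantInf ν f φ by linarith
  refine le_majorantInf fun ψ hψ => ?_
  have hle : φ + const X c ≤ (ψ + const Y c).comp f := fun x => by
    simpa using hψ x
  linarith [majorantInf_le hν hf hle, hν.map_add_const ψ c]

theorem majorantInf_add_const (φ : C(X, ℝ)) (c : ℝ) :
    majorantInf ν f (φ + const X c) = majorantInf ν f φ + c := by
  refine le_antisymm (majorantInf_add_const_le hν hf φ c) ?_
  have h := majorantInf_add_const_le hν hf (φ + const X c) (-c)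
  have hφ : φ + const X c + const X (-c) = φ := by ext; simp
  rw [hφ] at h
  linarith

theorem majorantInf_smul_le {t : ℝ} (ht : 0 < t) (φ : C(X, ℝ)) :
    majorantInf ν f (t • φ) ≤ t * majorantInf ν f φ := by
  rw [← div_le_iff₀' ht]
  refine le_majorantInf fun ψ hψ => ?_
  have hle : t • φ ≤ (t • ψ).comp f := fun x => by
    simpa using mul_le_mul_of_nonneg_left (hψ x) ht.le
  rw [div_le_iff₀' ht, ← hν.map_smul ht.le]
  exact majorantInf_le hν hf hle

theorem majorantInf_smul {t : ℝ} (ht : 0 ≤ t) (φ : C(X, ℝ)) :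
    majorantInf ν f (t • φ) = t * majorantInf ν f φ := by
  rcases ht.eq_or_lt with rfl | ht
  · rw [zero_smul, zero_mul, ← zero_comp f, majorantInf_comp hν hf, hν.map_zero]
  refine le_antisymm (majorantInf_smul_le hν hf ht φ) ?_
  have h := majorantInf_smul_le hν hf (inv_pos.2 ht) (t • φ)
  rw [inv_smul_smul₀ ht.ne'] at h
  rwa [le_inv_mul_iff₀ ht] at h

theorem majorantInf_add_le (φ₁ φ₂ : C(X, ℝ)) :
    majorantInf ν f (φ₁ + φ₂) ≤ majorantInf ν f φ₁ + majorantInf ν f φ₂ := by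
  suffices majorantInf ν f (φ₁ + φ₂) - majorantInf ν f φ₂ ≤ majorantInf ν f φ₁ by linarith
  refine le_majorantInf fun ψ₁ hψ₁ => ?_
  suffices majorantInf ν f (φ₁ + φ₂) - ν ψ₁ ≤ majorantInf ν f φ₂ by linarith
  refine le_majorantInf fun ψ₂ hψ₂ => ?_
  have hle : φ₁ + φ₂ ≤ (ψ₁ + ψ₂).comp f := fun x => by
    simpa using add_le_add (hψ₁ x) (hψ₂ x)
  linarith [majorantInf_le hν hf hle, hν.map_add_le ψ₁ ψ₂]

theorem isOSFunctional_majorantInf : IsOSFunctional (majorantInf ν f) := by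
  refine ⟨?_, fun _ _ => majorantInf_mono hν hf, majorantInf_add_const hν hf,
    fun _ => majorantInf_smul hν hf, majorantInf_add_le hν hf⟩
  rw [← one_comp f, majorantInf_comp hν hf, hν.map_one]

end MajorantInf

theorem stmt_12_general {X Y : Type*} [TopologicalSpace X] [CompactSpace X]
    [TopologicalSpace Y]
    (f : C(X, Y)) (hf : Function.Surjective f)
    (ν : C(Y, ℝ) → ℝ) (hν : IsOSFunctional ν) :
    ∃ μ : C(X, ℝ) → ℝ, IsOSFunctional μ ∧ ∀ ψ : C(Y, ℝ), μ (ψ.comp f) = ν ψ :=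
  ⟨majorantInf ν f, isOSFunctional_majorantInf hν hf, majorantInf_comp hν hf⟩

theorem stmt_12 {X Y : Type*} [TopologicalSpace X] [CompactSpace X] [T2Space X]
    [TopologicalSpace Y] [CompactSpace Y] [T2Space Y]
    (f : C(X, Y)) (hf : Function.Surjective f)
    (ν : C(Y, ℝ) → ℝ) (hν : IsOSFunctional ν) :
    ∃ μ : C(X, ℝ) → ℝ, IsOSFunctional μ ∧ ∀ ψ : C(Y, ℝ), μ (ψ.comp f) = ν ψ :=
  stmt_12_general f hf ν hν
end
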